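/- For fixed k ∈ ℕ and p ∈ (0,1), the number of distinct legal mTables, i.e. distinct vectors of the form (m(1,p,α),…,m(k,p,α)) as α ranges over (0,1), is at most k(k+1)/2 + 1. -/
import Mathlib


/-- Binomial CDF: F(m; i, p) = ∑_{j=0}^m C(i,j) p^j (1-p)^{i-j}. -/
noncomputable def binCDF (i : ℕ) (p : ℝ) (m : ℕ) : ℝ :=
  ∑ j ∈ Finset.range (m + 1), (i.choose j : ℝ) * p ^ j * (1 - p) ^ (i - j)

/-- Binomial quantile: least m with F(m; i, p) ≥ α. -/
noncomputable def quantile (i : ℕ) (p α : ℝ) : ℕ :=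
  sInf {m : ℕ | α ≤ binCDF i p m}

lemma binCDF_self (i : ℕ) (p : ℝ) : binCDF i p i = 1 := by
  have h : binCDF i p i = (p + (1 - p)) ^ i := by
    rw [add_pow]
    exact Finset.sum_congr rfl fun j _ => by ring
  rw [h]
  ring

lemma quantile_le (i : ℕ) (p α : ℝ) (hα : α ≤ 1) : quantile i p α ≤ i :=
  Nat.sInf_le (by simp [Set.mem_setOf_eq, binCDF_self, hα])

lemma quantile_mono (i : ℕ) (p : ℝ) {α β : ℝ} (hβ : β ≤ 1) (h : α ≤ β) :
    quantile i p α ≤ quantile i p β := by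
  apply csInf_le_csInf (OrderBot.bddBelow _)
  · exact ⟨i, by simp [Set.mem_setOf_eq, binCDF_self, hβ]⟩
  · intro m hm
    exact le_trans h hm

/-- The number of distinct legal mTables of size k is at most k(k+1)/2 + 1. -/
theorem card_legal_mTables_le (k : ℕ) (p : ℝ) (hp0 : 0 < p) (hp1 : p < 1) :
    {v : Fin k → ℕ | ∃ α ∈ Set.Ioo (0 : ℝ) 1, v = fun i => quantile (i.1 + 1) p α}.Finite ∧
    {v : Fin k → ℕ | ∃ α ∈ Set.Ioo (0 : ℝ) 1, v = fun i => quantile (i.1 + 1) p α}.ncard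
      ≤ k * (k + 1) / 2 + 1 := by
  set S := {v : Fin k → ℕ | ∃ α ∈ Set.Ioo (0 : ℝ) 1, v = fun i => quantile (i.1 + 1) p α}
  set N := k * (k + 1) / 2 with hN
  set f : (Fin k → ℕ) → ℕ := fun v => ∑ i, v i with hf
  -- injectivity on S
  have key : ∀ α β : ℝ, α ∈ Set.Ioo (0:ℝ) 1 → β ∈ Set.Ioo (0:ℝ) 1 → α ≤ β →
      (∑ i : Fin k, quantile ((i : ℕ) + 1) p α) = (∑ i : Fin k, quantile ((i : ℕ) + 1) p β) →
      (fun i : Fin k => quantile ((i : ℕ) + 1) p α) = (fun i : Fin k => quantile ((i : ℕ) + 1) p β) := by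
    intro α β hα hβ hle hsum
    have hpt : ∀ i ∈ (Finset.univ : Finset (Fin k)), quantile ((i : ℕ) + 1) p α ≤ quantile ((i : ℕ) + 1) p β :=
      fun i _ => quantile_mono _ p hβ.2.le hle
    funext i
    exact ((Finset.sum_eq_sum_iff_of_le hpt).mp hsum i (Finset.mem_univ i))
  have hinj : Set.InjOn f S := by
    rintro v ⟨α, hα, rfl⟩ w ⟨β, hβ, rfl⟩ hsum
    rcases le_total α β with h | h
    · exact key α β hα hβ h hsum
    · exact (key β α hβ hα h hsum.symm).symm
  -- image bound
  have himg : f '' S ⊆ Set.Iic N := by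
    rintro n ⟨v, ⟨α, hα, rfl⟩, rfl⟩
    simp only [Set.mem_Iic, hf]
    calc ∑ i : Fin k, quantile (i.1 + 1) p α
        ≤ ∑ i : Fin k, (i.1 + 1) :=
          Finset.sum_le_sum fun i _ => quantile_le _ p α hα.2.le
      _ = ∑ j ∈ Finset.range k, (j + 1) := by
          rw [Finset.sum_range fun j => j + 1]
      _ = ∑ j ∈ Finset.range (k + 1), j := by
          rw [Finset.sum_range_succ_comm]
          simp [Finset.sum_add_distrib, Nat.add_comm]
      _ = N := by rw [Finset.sum_range_id, hN, Nat.add_sub_cancel, Nat.mul_comm]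
  have hIic : (Set.Iic N).Finite := Set.finite_Iic N
  have hfin : S.Finite :=
    Set.Finite.of_finite_image (hIic.subset himg) hinj
  refine ⟨hfin, ?_⟩
  calc S.ncard = (f '' S).ncard := (Set.ncard_image_of_injOn hinj).symm
    _ ≤ (Set.Iic N).ncard := Set.ncard_le_ncard himg hIic
    _ = N + 1 := by
        rw [← Finset.coe_Iic, Set.ncard_coe_finset, Nat.card_Iic]
  done
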